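/- arXiv:2203.04859 — 6 statements merged into one kernel-verified Lean document; each statement's English description precedes it below -/
import Mathlib

section
/- Let d ≥ 1 and for each j = 1,…,d let α_j, β_j ∈ ℝ satisfy −π < α_j < β_j ≤ π and 0 < β_j − α_j < π/2. Let Γ_j = {z ∈ ℂ : z ≠ 0 and α_j ≤ Arg z ≤ β_j} ∪ {0}, put Ω = Γ_1 × ⋯ × Γ_d ⊆ ℂ^d, let Ω° = {z : z_j ≠ 0 and α_j < Arg z_j < β_j for all j} be its interior, and let Ω_0 = {z ∈ ℂ^d : z_j ≠ 0 and Arg z_j ∈ {α_j, β_j} for all j} be its distinguished boundary. Let F : ℂ^d → ℂ be holomorphic on Ω° and continuous on Ω. If there are constants r_0, M > 0 and C > 0 such that |F(z)| ≤ C·e^{r_0 |z|²} for all z ∈ Ω and |F(z)| ≤ M for all z ∈ Ω_0, then |F(z)| ≤ M for all z ∈ Ω. -/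
/-!
Substituting `t = exp w` turns a sector `a ≤ arg t ≤ b` into the horizontal strip
`a ≤ im w ≤ b`, and the Gaussian bound into `‖g (exp w)‖ ≤ |C| exp (|r| exp (2 |re w|))`.
Since the opening satisfies `b - a < π / 2`, the type `2` of this double exponential is below
`π / (b - a)`, so the Phragmén–Lindelöf principle for strips bounds `g` by its values on the
two edges.

In several variables the edge conditions are removed one coordinate at a time. Fixing all
coordinates of a point `z` of the closed polysector but the `k`-th, the slice
`t ↦ F (update z k t)` is continuous on the closed sector and holomorphic on the open one: it is
a locally uniform limit of slices through interior points, by uniform continuity of `F` on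
compact sets. Where the `k`-th coordinate lies on an edge the slice is bounded by `M` by
induction, so the one-variable case bounds it everywhere.
-/

open Complex Set Filter Topology

namespace Complex

def closedSector (a b : ℝ) : Set ℂ := {t | t = 0 ∨ t.arg ∈ Icc a b}

def openSector (a b : ℝ) : Set ℂ := {t | t ≠ 0 ∧ t.arg ∈ Ioo a b}

def sectorEdges (a b : ℝ) : Set ℂ := {t | t ≠ 0 ∧ (t.arg = a ∨ t.arg = b)}

theorem openSector_subset_closedSector (a b : ℝ) : openSector a b ⊆ closedSector a b :=
  fun _ ht => .inr (Ioo_subset_Icc_self ht.2)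

theorem arg_exp_of_im_mem_Ioc {w : ℂ} (hw : w.im ∈ Ioc (-Real.pi) Real.pi) :
    (exp w).arg = w.im := by
  rwa [arg_exp, toIocMod_eq_self, show -Real.pi + 2 * Real.pi = Real.pi by ring]

theorem arg_ofReal_mul_exp_mul_I {r θ : ℝ} (hr : 0 < r) (hθ : θ ∈ Ioc (-Real.pi) Real.pi) :
    ((r : ℂ) * exp (θ * I)).arg = θ := by
  rw [arg_real_mul _ hr, arg_exp_of_im_mem_Ioc] <;> simp [hθ]

theorem isOpen_openSector {a b : ℝ} (hb : b ≤ Real.pi) : IsOpen (openSector a b) := by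
  have hsub : openSector a b ⊆ slitPlane := fun t ht =>
    mem_slitPlane_iff_arg.mpr ⟨(ht.2.2.trans_le hb).ne, ht.1⟩
  rw [← inter_eq_right.mpr hsub]
  convert continuousOn_arg.isOpen_inter_preimage isOpen_slitPlane isOpen_Ioo using 1
  ext t
  exact ⟨fun ⟨hs, _, ht⟩ => ⟨hs, ht⟩, fun ⟨hs, ht⟩ => ⟨hs, (mem_slitPlane_iff_arg.mp hs).2, ht⟩⟩

theorem closedSector_subset_closure_openSector {a b : ℝ} (ha : -Real.pi < a) (hab : a < b)
    (hb : b ≤ Real.pi) : closedSector a b ⊆ closure (openSector a b) := by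
  set polar : ℝ × ℝ → ℂ := fun p => p.1 * exp (p.2 * I)
  have hpolar : Continuous polar := by fun_prop
  have himage : polar '' (Ioi 0 ×ˢ Ioo a b) ⊆ openSector a b := by
    rintro _ ⟨⟨r, θ⟩, ⟨hr, hθ⟩, rfl⟩
    have harg : (polar (r, θ)).arg = θ :=
      arg_ofReal_mul_exp_mul_I hr ⟨ha.trans hθ.1, hθ.2.le.trans hb⟩
    exact ⟨mul_ne_zero (ofReal_ne_zero.mpr hr.ne') (exp_ne_zero _), by rw [harg]; exact hθ⟩
  have hclosure : closure (Ioi (0 : ℝ) ×ˢ Ioo a b) = Ici 0 ×ˢ Icc a b := by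
    rw [closure_prod_eq, closure_Ioi, closure_Ioo hab.ne]
  intro t ht
  refine closure_mono himage (image_closure_subset_closure_image hpolar ?_)
  rw [hclosure]
  rcases ht with rfl | ht
  · exact ⟨(0, a), ⟨mem_Ici.mpr le_rfl, le_rfl, hab.le⟩, by simp [polar]⟩
  · exact ⟨(‖t‖, t.arg), ⟨norm_nonneg t, ht⟩, norm_mul_exp_arg_mul_I t⟩

variable {ι : Type*}

def closedPolysector (α β : ι → ℝ) : Set (ι → ℂ) := univ.pi fun j => closedSector (α j) (β j)

def openPolysector (α β : ι → ℝ) : Set (ι → ℂ) := univ.pi fun j => openSector (α j) (β j)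

def distinguishedBoundary (α β : ι → ℝ) : Set (ι → ℂ) := univ.pi fun j => sectorEdges (α j) (β j)

variable {α β : ι → ℝ}

theorem update_mem_closedPolysector [DecidableEq ι] {z : ι → ℂ} (hz : z ∈ closedPolysector α β)
    {k : ι} {t : ℂ} (ht : t ∈ closedSector (α k) (β k)) :
    Function.update z k t ∈ closedPolysector α β :=
  (update_mem_pi_iff_of_mem hz).2 fun _ => ht

theorem closedPolysector_subset_closure_openPolysector (hα : ∀ j, -Real.pi < α j)
    (hαβ : ∀ j, α j < β j) (hβ : ∀ j, β j ≤ Real.pi) :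
    closedPolysector α β ⊆ closure (openPolysector α β) := by
  rw [openPolysector, closure_pi_set]
  exact pi_mono fun j _ => closedSector_subset_closure_openSector (hα j) (hαβ j) (hβ j)

end Complex

theorem sum_norm_update_sq {ι G : Type*} [Fintype ι] [DecidableEq ι] [Norm G] (z : ι → G)
    (k : ι) (t : G) :
    ∑ j, ‖Function.update z k t j‖ ^ 2 = ‖t‖ ^ 2 + ∑ j ∈ Finset.univ \ {k}, ‖z j‖ ^ 2 := by
  rw [← Finset.sum_update_of_mem (Finset.mem_univ k)]
  congr with j
  rcases eq_or_ne j k with rfl | hj <;> simp [*]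

section Holomorphy

variable {E : Type*} [NormedAddCommGroup E] [NormedSpace ℂ E] [CompleteSpace E]

theorem differentiableOn_of_mem_closure_of_continuousOn_prod {X : Type*} [TopologicalSpace X]
    {f : X → ℂ → E} {s T : Set X} {U : Set ℂ} {x : X} (hU : IsOpen U)
    (hf : ContinuousOn (Function.uncurry f) (T ×ˢ U)) (hsT : s ⊆ T) (hxT : x ∈ T)
    (hxs : x ∈ closure s) (hs : ∀ y ∈ s, DifferentiableOn ℂ (f y) U) :
    DifferentiableOn ℂ (f x) U := by
  have := mem_closure_iff_nhdsWithin_neBot.mp hxs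
  refine TendstoLocallyUniformlyOn.differentiableOn (φ := 𝓝[s] x) ?_
    (eventually_mem_nhdsWithin.mono hs) hU
  rw [tendstoLocallyUniformlyOn_iff_forall_isCompact hU]
  intro K hKU hK u hu
  obtain ⟨v, hv, hvu⟩ :=
    hK.mem_uniformity_of_prod (hf.mono (prod_mono_right hKU)) hxT (symm_le_uniformity hu)
  filter_upwards [nhdsWithin_mono x hsT hv] with y hy t ht using hvu y hy t ht

theorem differentiableOn_update_of_mem_closedPolysector {ι : Type*} [Fintype ι] [DecidableEq ι]
    {α β : ι → ℝ} {F : (ι → ℂ) → E} (hα : ∀ j, -Real.pi < α j) (hαβ : ∀ j, α j < β j)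
    (hβ : ∀ j, β j ≤ Real.pi) (hd : DifferentiableOn ℂ F (openPolysector α β))
    (hc : ContinuousOn F (closedPolysector α β)) {z : ι → ℂ} (hz : z ∈ closedPolysector α β)
    (k : ι) : DifferentiableOn ℂ (fun t => F (Function.update z k t)) (openSector (α k) (β k)) := by
  refine differentiableOn_of_mem_closure_of_continuousOn_prod
    (f := fun x t => F (Function.update x k t)) (isOpen_openSector (hβ k)) ?_
    (pi_mono fun j _ => openSector_subset_closedSector _ _) hz
    (closedPolysector_subset_closure_openPolysector hα hαβ hβ hz) fun y hy => ?_
  · exact hc.comp (continuous_update k).continuousOn fun p hp =>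
      update_mem_closedPolysector hp.1 (openSector_subset_closedSector _ _ hp.2)
  · exact hd.comp (fun t _ => (hasFDerivAt_update y t).differentiableAt.differentiableWithinAt)
      fun t ht => (update_mem_pi_iff_of_mem hy).2 fun _ => ht

end Holomorphy

namespace PhragmenLindelof

variable {E : Type*} [NormedAddCommGroup E] [NormedSpace ℂ E]

theorem sector {a b C r M : ℝ} (ha : -Real.pi < a) (hab : a < b) (hb : b ≤ Real.pi)
    (hopening : b - a < Real.pi / 2) {g : ℂ → E} (hd : DifferentiableOn ℂ g (openSector a b))
    (hc : ContinuousOn g (closedSector a b))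
    (hgrowth : ∀ t ∈ closedSector a b, ‖g t‖ ≤ C * Real.exp (r * ‖t‖ ^ 2))
    (hedges : ∀ t ∈ sectorEdges a b, ‖g t‖ ≤ M) {t : ℂ} (ht : t ∈ closedSector a b) :
    ‖g t‖ ≤ M := by
  have harg : ∀ w : ℂ, w.im ∈ Icc a b → (exp w).arg = w.im := fun w hw =>
    arg_exp_of_im_mem_Ioc ⟨ha.trans_le hw.1, hw.2.trans hb⟩
  have hmaps : MapsTo exp (im ⁻¹' Icc a b) (closedSector a b) := fun w hw =>
    .inr (by rw [harg w hw]; exact hw)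
  have hgrowth_log : ∀ w ∈ im ⁻¹' Icc a b,
      ‖g (exp w)‖ ≤ |C| * ‖Real.exp (|r| * Real.exp (2 * |w.re|))‖ := by
    intro w hw
    have hsq : r * ‖exp w‖ ^ 2 ≤ |r| * Real.exp (2 * |w.re|) := by
      rw [norm_exp, ← Real.exp_nat_mul]
      calc r * Real.exp (2 * w.re) ≤ |r| * Real.exp (2 * w.re) := by
            gcongr; exact le_abs_self r
        _ ≤ |r| * Real.exp (2 * |w.re|) := by gcongr; exact le_abs_self _
    calc ‖g (exp w)‖ ≤ C * Real.exp (r * ‖exp w‖ ^ 2) := hgrowth _ (hmaps hw)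
      _ ≤ |C| * Real.exp (|r| * Real.exp (2 * |w.re|)) := by
          gcongr
          exact le_abs_self C
      _ = |C| * ‖Real.exp (|r| * Real.exp (2 * |w.re|))‖ := by
          rw [Real.norm_eq_abs, Real.abs_exp]
  have hstrip : ∀ w : ℂ, w.im ∈ Icc a b → ‖g (exp w)‖ ≤ M := by
    intro w hw
    refine horizontal_strip (f := g ∘ exp) ⟨?_, ?_⟩ ?_ (fun v hv => hedges _ ⟨exp_ne_zero v, ?_⟩)
      (fun v hv => hedges _ ⟨exp_ne_zero v, ?_⟩) hw.1 hw.2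
    · refine hd.comp differentiable_exp.differentiableOn fun v hv => ⟨exp_ne_zero v, ?_⟩
      rw [harg v (Ioo_subset_Icc_self hv)]
      exact hv
    · refine (hc.comp continuous_exp.continuousOn hmaps).mono ?_
      exact (continuous_im.closure_preimage_subset _).trans (by rw [closure_Ioo hab.ne])
    · refine ⟨2, by rw [lt_div_iff₀ (sub_pos.2 hab)]; linarith, |r|, ?_⟩
      exact .of_bound _ (eventually_inf_principal.2 (.of_forall fun v hv =>
        hgrowth_log v (Ioo_subset_Icc_self hv)))
    · exact .inl (by rw [harg v (by simp [hv, hab.le])]; exact hv)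
    · exact .inr (by rw [harg v (by simp [hv, hab.le])]; exact hv)
  have hopen : ∀ t ∈ openSector a b, ‖g t‖ ≤ M := fun t ht => by
    simpa [exp_log ht.1] using hstrip (log t) (by rw [log_im]; exact Ioo_subset_Icc_self ht.2)
  rcases eq_or_ne t 0 with rfl | ht0
  · exact ContinuousWithinAt.closure_le
      (closedSector_subset_closure_openSector ha hab hb ht)
      ((hc 0 ht).norm.mono (openSector_subset_closedSector a b))
      continuousWithinAt_const hopen
  · simpa [exp_log ht0] using hstrip (log t) (by rw [log_im]; exact ht.resolve_left ht0)

theorem polysector [CompleteSpace E] {ι : Type*} [Fintype ι] {α β : ι → ℝ} {F : (ι → ℂ) → E}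
    {C r M : ℝ} (hα : ∀ j, -Real.pi < α j) (hαβ : ∀ j, α j < β j)
    (hβ : ∀ j, β j ≤ Real.pi) (hopening : ∀ j, β j - α j < Real.pi / 2)
    (hd : DifferentiableOn ℂ F (openPolysector α β)) (hc : ContinuousOn F (closedPolysector α β))
    (hgrowth : ∀ z ∈ closedPolysector α β, ‖F z‖ ≤ C * Real.exp (r * ∑ j, ‖z j‖ ^ 2))
    (hbound : ∀ z ∈ distinguishedBoundary α β, ‖F z‖ ≤ M) {z : ι → ℂ}
    (hz : z ∈ closedPolysector α β) : ‖F z‖ ≤ M := by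
  classical
  suffices key : ∀ s : Finset ι, ∀ z ∈ closedPolysector α β,
      (∀ j ∉ s, z j ∈ sectorEdges (α j) (β j)) → ‖F z‖ ≤ M from
    key Finset.univ z hz fun j hj => absurd (Finset.mem_univ j) hj
  intro s
  induction s using Finset.induction_on with
  | empty => exact fun z _ hedges => hbound z fun j _ => hedges j (Finset.notMem_empty j)
  | insert k s _ ih =>
    intro z hz hedges
    have hupdate : Continuous (Function.update z k) := continuous_const.update k continuous_id
    have hslice : ContinuousOn (fun t => F (Function.update z k t)) (closedSector (α k) (β k)) :=
      hc.comp hupdate.continuousOn fun _ ht => update_mem_closedPolysector hz ht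
    rw [← Function.update_eq_self k z]
    refine sector (hα k) (hαβ k) (hβ k) (hopening k)
      (differentiableOn_update_of_mem_closedPolysector hα hαβ hβ hd hc hz k) hslice
      (C := C * Real.exp (r * ∑ j ∈ Finset.univ \ {k}, ‖z j‖ ^ 2)) (r := r) ?_ ?_ (hz k trivial)
    · intro t ht
      calc ‖F (Function.update z k t)‖
          ≤ C * Real.exp (r * ∑ j, ‖Function.update z k t j‖ ^ 2) :=
            hgrowth _ (update_mem_closedPolysector hz ht)
        _ = _ := by rw [sum_norm_update_sq, mul_add, Real.exp_add]; ring
    · intro t ht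
      refine ih _ (update_mem_closedPolysector hz (.inr ?_)) fun j hj => ?_
      · rcases ht.2 with h | h <;> simp [h, (hαβ k).le]
      · rcases eq_or_ne j k with rfl | hjk
        · simpa using ht
        · simpa [hjk] using hedges j (by simp [hjk, hj])

end PhragmenLindelof

theorem phragmen_lindelof_polysector_gaussian_general
    (d : ℕ) (α β : Fin d → ℝ)
    (hα : ∀ j, -Real.pi < α j) (hαβ : ∀ j, α j < β j) (hβ : ∀ j, β j ≤ Real.pi)
    (hopening : ∀ j, β j - α j < Real.pi / 2)
    (Ω Ωint Ω₀ : Set (EuclideanSpace ℂ (Fin d)))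
    (hΩ : Ω = {z | ∀ j, z j = 0 ∨ (α j ≤ (z j).arg ∧ (z j).arg ≤ β j)})
    (hΩint : Ωint = {z | ∀ j, z j ≠ 0 ∧ α j < (z j).arg ∧ (z j).arg < β j})
    (hΩ₀ : Ω₀ = {z | ∀ j, z j ≠ 0 ∧ ((z j).arg = α j ∨ (z j).arg = β j)})
    (F : EuclideanSpace ℂ (Fin d) → ℂ)
    (hF₁ : DifferentiableOn ℂ F Ωint)
    (hF₂ : ContinuousOn F Ω)
    (r₀ M C : ℝ)
    (hgrowth : ∀ z ∈ Ω, ‖F z‖ ≤ C * Real.exp (r₀ * ‖z‖ ^ 2))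
    (hbound : ∀ z ∈ Ω₀, ‖F z‖ ≤ M) :
    ∀ z ∈ Ω, ‖F z‖ ≤ M := by
  subst hΩ hΩint hΩ₀
  intro z hz
  have htoLp : Differentiable ℂ (WithLp.toLp 2 : (Fin d → ℂ) → EuclideanSpace ℂ (Fin d)) :=
    (PiLp.continuousLinearEquiv 2 ℂ fun _ : Fin d => ℂ).symm.differentiable
  exact PhragmenLindelof.polysector (F := F ∘ WithLp.toLp 2) hα hαβ hβ hopening
    (hF₁.comp htoLp.differentiableOn fun x hx j => hx j trivial)
    (hF₂.comp htoLp.continuous.continuousOn fun x hx j => hx j trivial)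
    (fun x hx => by simpa [EuclideanSpace.norm_sq_eq] using hgrowth _ fun j => hx j trivial)
    (fun x hx => hbound _ fun j => hx j trivial) (z := WithLp.ofLp z) fun j _ => hz j

/-- **Phragmén–Lindelöf type estimate on a closed polysector** (Lemma A in the
paper): a square-exponential a priori bound on the closed polysector `Ω`
together with the bound `M` on the distinguished boundary `Ω₀` gives the bound
`M` on all of `Ω`.  Each sector has opening strictly less than `π/2`. -/
theorem phragmen_lindelof_polysector_gaussian
    (d : ℕ) (hd : 1 ≤ d) (α β : Fin d → ℝ)
    (hα : ∀ j, -Real.pi < α j) (hαβ : ∀ j, α j < β j) (hβ : ∀ j, β j ≤ Real.pi)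
    (hopening : ∀ j, β j - α j < Real.pi / 2)
    (Ω Ωint Ω₀ : Set (EuclideanSpace ℂ (Fin d)))
    (hΩ : Ω = {z | ∀ j, z j = 0 ∨ (α j ≤ (z j).arg ∧ (z j).arg ≤ β j)})
    (hΩint : Ωint = {z | ∀ j, z j ≠ 0 ∧ α j < (z j).arg ∧ (z j).arg < β j})
    (hΩ₀ : Ω₀ = {z | ∀ j, z j ≠ 0 ∧ ((z j).arg = α j ∨ (z j).arg = β j)})
    (F : EuclideanSpace ℂ (Fin d) → ℂ)
    (hF₁ : DifferentiableOn ℂ F Ωint)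
    (hF₂ : ContinuousOn F Ω)
    (r₀ M C : ℝ) (hr₀ : 0 < r₀) (hM : 0 < M) (hC : 0 < C)
    (hgrowth : ∀ z ∈ Ω, ‖F z‖ ≤ C * Real.exp (r₀ * ‖z‖ ^ 2))
    (hbound : ∀ z ∈ Ω₀, ‖F z‖ ≤ M) :
    ∀ z ∈ Ω, ‖F z‖ ≤ M :=
  phragmen_lindelof_polysector_gaussian_general d α β hα hαβ hβ hopening Ω Ωint Ω₀ hΩ hΩint hΩ₀ F
    hF₁ hF₂ r₀ M C hgrowth hbound
end

section
/- Let d ≥ 1, σ > 0 and set p = 2σ/(σ+1) (so 0 < p < 2), and let φ(x) = π^{−d/4} e^{−|x|²/2}. Then there exists a constant c > 0, depending only on d and σ, such that for every r > 0 there is a constant C_r > 0 with the following property: for every measurable f : ℝ^d → ℂ and every A ≥ 0 such that |f(y)| ≤ A·e^{−|y|²/2}·e^{c·r·|y|^p} for all y ∈ ℝ^d, one has |V_φ f(x,ξ)| ≤ C_r·A·e^{−|x|²/4}·e^{r|x|^p} for all x, ξ ∈ ℝ^d. -/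
/-
Completing the square, `‖y‖²/2 + ‖y - x‖²/2 = ‖y - x/2‖² + ‖x‖²/4`, so the Gaussian factors of `f`
and of the window leave `e^{-‖x‖²/4}` times a Gaussian centred at `x/2`. Since
`‖y‖^p ≤ (2‖y - x/2‖)^p + ‖x‖^p`, the weight `e^{r‖y‖^p}` (with `c = 1`) splits off `e^{r‖x‖^p}`,
and the remaining `e^{2^p r ‖y - x/2‖^p}` is absorbed, because `p < 2`, by half of that Gaussian
up to a constant `e^K`. What is left integrates to `(2π)^{d/2}`, cancelling the normalisation of
the transform.
-/

open MeasureTheory Complex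
open scoped RealInnerProductSpace

/-- The short-time Fourier transform of `f` with window `φ`:
`V_φ f(x,ξ) = (2π)^{−d/2} ∫ f(y) conj(φ(y−x)) e^{−i⟨y,ξ⟩} dy`. -/
noncomputable def STFT {d : ℕ} (φ f : EuclideanSpace ℝ (Fin d) → ℂ)
    (x ξ : EuclideanSpace ℝ (Fin d)) : ℂ :=
  (((2 * Real.pi) ^ (-(d : ℝ) / 2) : ℝ) : ℂ) *
    ∫ y, f y * (starRingEnd ℂ) (φ (y - x)) *
      Complex.exp (-(Complex.I * (⟪y, ξ⟫ : ℝ)))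

lemma exists_mul_rpow_le_sq_div_two_add {q : ℝ} (r : ℝ) (hq0 : 0 ≤ q) (hq2 : q < 2)
    (hr : 0 ≤ r) : ∃ K : ℝ, ∀ t : ℝ, 0 ≤ t → r * t ^ q ≤ t ^ 2 / 2 + K := by
  -- beyond `T`, `t ^ (2 - q) ≥ 2 * r` makes `r * t ^ q ≤ t ^ 2 / 2`
  set T : ℝ := max 1 ((2 * r) ^ (2 - q)⁻¹)
  have hT : 0 < T := lt_of_lt_of_le one_pos (le_max_left _ _)
  have h2q : 0 < 2 - q := by linarith
  refine ⟨r * T ^ q, fun t ht => ?_⟩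
  rcases le_total t T with htT | hTt
  · have : r * t ^ q ≤ r * T ^ q := by gcongr
    nlinarith [sq_nonneg t]
  · have ht0 : 0 < t := hT.trans_le hTt
    have hrt : 2 * r ≤ t ^ (2 - q) :=
      calc 2 * r = ((2 * r) ^ (2 - q)⁻¹) ^ (2 - q) := by
            rw [← Real.rpow_mul (by positivity), inv_mul_cancel₀ h2q.ne', Real.rpow_one]
        _ ≤ t ^ (2 - q) := by gcongr; exact (le_max_right _ _).trans hTt
    have hsplit : t ^ 2 = t ^ (2 - q) * t ^ q := by
      rw [← Real.rpow_add ht0, sub_add_cancel, Real.rpow_two]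
    have : 0 ≤ r * T ^ q := by positivity
    nlinarith [Real.rpow_nonneg ht0.le q]

lemma rpow_norm_le_rpow_two_mul_norm_sub_half_smul_add {E : Type*} [SeminormedAddCommGroup E]
    [NormedSpace ℝ E] {p : ℝ} (hp : 0 ≤ p) (x y : E) :
    ‖y‖ ^ p ≤ (2 * ‖y - (2⁻¹ : ℝ) • x‖) ^ p + ‖x‖ ^ p := by
  have hy : ‖y‖ ≤ ‖y - (2⁻¹ : ℝ) • x‖ + ‖x‖ / 2 := by
    have := norm_le_norm_sub_add y ((2⁻¹ : ℝ) • x)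
    rwa [norm_smul, Real.norm_of_nonneg (by norm_num), inv_mul_eq_div] at this
  rcases le_total (2 * ‖y - (2⁻¹ : ℝ) • x‖) ‖x‖ with h | h
  · have : ‖y‖ ^ p ≤ ‖x‖ ^ p := by gcongr; linarith
    linarith [Real.rpow_nonneg (by positivity : 0 ≤ 2 * ‖y - (2⁻¹ : ℝ) • x‖) p]
  · have : ‖y‖ ^ p ≤ (2 * ‖y - (2⁻¹ : ℝ) • x‖) ^ p := by gcongr; linarith
    linarith [Real.rpow_nonneg (norm_nonneg x) p]

lemma norm_sq_div_two_add_norm_sub_sq_div_two {E : Type*} [NormedAddCommGroup E]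
    [InnerProductSpace ℝ E] (x y : E) :
    ‖y‖ ^ 2 / 2 + ‖y - x‖ ^ 2 / 2 = ‖y - (2⁻¹ : ℝ) • x‖ ^ 2 + ‖x‖ ^ 2 / 4 := by
  have h := parallelogram_law_with_norm ℝ (y - (2⁻¹ : ℝ) • x) ((2⁻¹ : ℝ) • x)
  have hx : y - (2⁻¹ : ℝ) • x - (2⁻¹ : ℝ) • x = y - x := by module
  rw [sub_add_cancel, hx, norm_smul, Real.norm_of_nonneg (by norm_num)] at h
  linarith


lemma exponent_le_of_mul_rpow_le {E : Type*} [NormedAddCommGroup E] [InnerProductSpace ℝ E]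
    {p r K : ℝ} (hp : 0 ≤ p) (hr : 0 ≤ r)
    (hK : ∀ t : ℝ, 0 ≤ t → 2 ^ p * r * t ^ p ≤ t ^ 2 / 2 + K) (x y : E) :
    -‖y‖ ^ 2 / 2 + r * ‖y‖ ^ p - ‖y - x‖ ^ 2 / 2 ≤
      K - ‖x‖ ^ 2 / 4 + r * ‖x‖ ^ p - ‖y - (2⁻¹ : ℝ) • x‖ ^ 2 / 2 := by
  have hsplit := rpow_norm_le_rpow_two_mul_norm_sub_half_smul_add hp x y
  rw [Real.mul_rpow (by norm_num) (norm_nonneg _)] at hsplit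
  have hz := hK _ (norm_nonneg (y - (2⁻¹ : ℝ) • x))
  have hsq := norm_sq_div_two_add_norm_sub_sq_div_two x y
  nlinarith

section Gaussian

variable {V : Type*} [NormedAddCommGroup V] [InnerProductSpace ℝ V] [FiniteDimensional ℝ V]
  [MeasurableSpace V] [BorelSpace V]

lemma integral_exp_neg_norm_sub_sq_div_two (a : V) :
    ∫ v : V, Real.exp (-‖v - a‖ ^ 2 / 2) =
      (2 * Real.pi) ^ ((Module.finrank ℝ V : ℝ) / 2) := by
  have h := GaussianFourier.integral_rexp_neg_mul_sq_norm (V := V) (by norm_num : (0 : ℝ) < 2⁻¹)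
  rw [div_inv_eq_mul, mul_comm] at h
  rw [integral_sub_right_eq_self (fun v : V => Real.exp (-‖v‖ ^ 2 / 2)) a, ← h]
  congr 1 with v
  ring_nf

lemma integrable_exp_neg_norm_sub_sq_div_two (a : V) :
    Integrable (fun v : V => Real.exp (-‖v - a‖ ^ 2 / 2)) :=
  .of_integral_ne_zero (by rw [integral_exp_neg_norm_sub_sq_div_two]; positivity)

end Gaussian

lemma norm_STFT_le_of_norm_mul_le {d : ℕ} {φ f : EuclideanSpace ℝ (Fin d) → ℂ}
    {x ξ a : EuclideanSpace ℝ (Fin d)} {M : ℝ}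
    (h : ∀ y, ‖f y‖ * ‖φ (y - x)‖ ≤ M * Real.exp (-‖y - a‖ ^ 2 / 2)) :
    ‖STFT φ f x ξ‖ ≤ M := by
  have hc : 0 < (2 * Real.pi) ^ (-(d : ℝ) / 2) := by positivity
  have hint : ‖∫ y, f y * (starRingEnd ℂ) (φ (y - x)) *
      Complex.exp (-(Complex.I * (⟪y, ξ⟫ : ℝ)))‖ ≤ M * (2 * Real.pi) ^ ((d : ℝ) / 2) := by
    have hgauss := integral_exp_neg_norm_sub_sq_div_two a
    rw [finrank_euclideanSpace_fin] at hgauss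
    rw [← hgauss, ← integral_const_mul]
    refine norm_integral_le_of_norm_le ((integrable_exp_neg_norm_sub_sq_div_two a).const_mul M)
      (.of_forall fun y => ?_)
    have hphase : ‖Complex.exp (-(Complex.I * (⟪y, ξ⟫ : ℝ)))‖ = 1 := by
      rw [Complex.norm_exp]; simp
    rw [norm_mul, norm_mul, RCLike.norm_conj, hphase, mul_one]
    exact h y
  rw [STFT, norm_mul, Complex.norm_real, Real.norm_of_nonneg hc.le]
  calc (2 * Real.pi) ^ (-(d : ℝ) / 2) * ‖_‖
      ≤ (2 * Real.pi) ^ (-(d : ℝ) / 2) * (M * (2 * Real.pi) ^ ((d : ℝ) / 2)) := by gcongr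
    _ = M := by
      rw [mul_left_comm, ← Real.rpow_add (by positivity), neg_div, neg_add_cancel,
        Real.rpow_zero, mul_one]

lemma norm_ofReal_mul_exp_neg_sq_div_two {c : ℝ} (hc : 0 ≤ c) (t : ℝ) :
    ‖(c : ℂ) * Complex.exp (-((t : ℂ) ^ 2) / 2)‖ = c * Real.exp (-t ^ 2 / 2) := by
  have hre : -((t : ℂ) ^ 2) / 2 = ((-t ^ 2 / 2 : ℝ) : ℂ) := by push_cast; ring
  rw [norm_mul, Complex.norm_of_nonneg hc, hre, Complex.norm_exp_ofReal]

theorem stft_bound_of_weighted_bound_flat_general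
    (d : ℕ) (σ : ℝ) (hσ : 0 < σ) (p : ℝ) (hp : p = 2 * σ / (σ + 1))
    (φ : EuclideanSpace ℝ (Fin d) → ℂ)
    (hφ : φ = fun x => ((Real.pi ^ (-(d : ℝ) / 4) : ℝ) : ℂ) *
      Complex.exp (-((‖x‖ : ℂ) ^ 2) / 2)) :
    ∃ c : ℝ, 0 < c ∧ ∀ r : ℝ, 0 < r → ∃ C : ℝ, 0 < C ∧
      ∀ f : EuclideanSpace ℝ (Fin d) → ℂ, Measurable f →
      ∀ A : ℝ, 0 ≤ A →
        (∀ y, ‖f y‖ ≤ A * Real.exp (-‖y‖ ^ 2 / 2) * Real.exp (c * r * ‖y‖ ^ p)) →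
        ∀ x ξ, ‖STFT φ f x ξ‖ ≤
          C * A * Real.exp (-‖x‖ ^ 2 / 4) * Real.exp (r * ‖x‖ ^ p) := by
  have hp0 : 0 ≤ p := by rw [hp]; positivity
  have hp2 : p < 2 := by rw [hp, div_lt_iff₀ (by linarith)]; linarith
  refine ⟨1, one_pos, fun r hr => ?_⟩
  obtain ⟨K, hK⟩ := exists_mul_rpow_le_sq_div_two_add (2 ^ p * r) hp0 hp2 (by positivity)
  set P : ℝ := Real.pi ^ (-(d : ℝ) / 4)
  refine ⟨P * Real.exp K, by positivity, fun f _ A hA hf x ξ => ?_⟩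
  refine norm_STFT_le_of_norm_mul_le (a := (2⁻¹ : ℝ) • x) fun y => ?_
  rw [hφ, norm_ofReal_mul_exp_neg_sq_div_two (by positivity)]
  calc ‖f y‖ * (P * Real.exp (-‖y - x‖ ^ 2 / 2))
      ≤ A * Real.exp (-‖y‖ ^ 2 / 2) * Real.exp (1 * r * ‖y‖ ^ p) *
          (P * Real.exp (-‖y - x‖ ^ 2 / 2)) := by gcongr; exact hf y
    _ = A * P * Real.exp (-‖y‖ ^ 2 / 2 + r * ‖y‖ ^ p - ‖y - x‖ ^ 2 / 2) := by
      simp only [one_mul, sub_eq_add_neg, Real.exp_add, neg_div]; ring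
    _ ≤ A * P * Real.exp (K - ‖x‖ ^ 2 / 4 + r * ‖x‖ ^ p - ‖y - (2⁻¹ : ℝ) • x‖ ^ 2 / 2) := by
      gcongr A * P * Real.exp ?_; exact exponent_le_of_mul_rpow_le hp0 hr.le hK x y
    _ = P * Real.exp K * A * Real.exp (-‖x‖ ^ 2 / 4) * Real.exp (r * ‖x‖ ^ p) *
          Real.exp (-‖y - (2⁻¹ : ℝ) • x‖ ^ 2 / 2) := by
      simp only [sub_eq_add_neg, Real.exp_add, neg_div]; ring

/-- Estimate \eqref{Eq:FTEstGivesWeakPilSpProp1} in the Roumieu case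
`s = ♭_σ`: a weighted Gaussian bound on `f` yields a weighted Gaussian bound
on its short-time Fourier transform with Gaussian window, with weight
`e^{−r|y|^p}`, `p = 2σ/(σ+1)`. -/
theorem stft_bound_of_weighted_bound_flat
    (d : ℕ) (hd : 1 ≤ d) (σ : ℝ) (hσ : 0 < σ) (p : ℝ) (hp : p = 2 * σ / (σ + 1))
    (φ : EuclideanSpace ℝ (Fin d) → ℂ)
    (hφ : φ = fun x => ((Real.pi ^ (-(d : ℝ) / 4) : ℝ) : ℂ) *
      Complex.exp (-((‖x‖ : ℂ) ^ 2) / 2)) :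
    ∃ c : ℝ, 0 < c ∧ ∀ r : ℝ, 0 < r → ∃ C : ℝ, 0 < C ∧
      ∀ f : EuclideanSpace ℝ (Fin d) → ℂ, Measurable f →
      ∀ A : ℝ, 0 ≤ A →
        (∀ y, ‖f y‖ ≤ A * Real.exp (-‖y‖ ^ 2 / 2) * Real.exp (c * r * ‖y‖ ^ p)) →
        ∀ x ξ, ‖STFT φ f x ξ‖ ≤
          C * A * Real.exp (-‖x‖ ^ 2 / 4) * Real.exp (r * ‖x‖ ^ p) :=
  stft_bound_of_weighted_bound_flat_general d σ hσ p hp φ hφ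
end

section
/- Let d ≥ 1, let s ∈ ℝ with 0 ≤ s < 1/2 and set q = 1/(1 − 2s) (so q ≥ 1), and let φ(x) = π^{−d/4} e^{−|x|²/2}. Then there exists a constant c > 0, depending only on d and s, such that for every r > 0 there is a constant C_r > 0 with the following property: for every measurable f : ℝ^d → ℂ and every A ≥ 0 such that |f(y)| ≤ A·e^{−|y|²/2}·e^{c·r·(log(1+|y|))^q} for all y ∈ ℝ^d, one has |V_φ f(x,ξ)| ≤ C_r·A·e^{−|x|²/4}·e^{r(log(1+|x|))^q} for all x, ξ ∈ ℝ^d. -/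
open MeasureTheory Complex
open scoped RealInnerProductSpace

/-!
Write `y = u + x / 2`. The Gaussian exponents recombine as
`‖y‖² / 2 + ‖y - x‖² / 2 = ‖x‖² / 4 + ‖u‖²`, and `1 + ‖y‖ ≤ (1 + ‖u‖)(1 + ‖x‖)` together with
convexity of `t ↦ t ^ q` gives
`2 ^ (1 - q) (log (1 + ‖y‖)) ^ q ≤ (log (1 + ‖u‖)) ^ q + (log (1 + ‖x‖)) ^ q`, so `c = 2 ^ (1 - q)`.
Since `(log (1 + t)) ^ q` grows at most linearly, the weight in `u` is absorbed by half of
`e ^ (-‖u‖²)`; the remaining `e ^ (-‖u‖² / 2)` integrates to `(2π) ^ (d / 2)`, which cancels the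
normalisation of the STFT.
-/

open Real

lemma norm_sq_add_norm_sub_sq_eq {E : Type*} [NormedAddCommGroup E] [InnerProductSpace ℝ E]
    (x y : E) : ‖y‖ ^ 2 + ‖y - x‖ ^ 2 = ‖x‖ ^ 2 / 2 + 2 * ‖y - (2⁻¹ : ℝ) • x‖ ^ 2 := by
  have h := parallelogram_law_with_norm ℝ (y - (2⁻¹ : ℝ) • x) ((2⁻¹ : ℝ) • x)
  rw [sub_add_cancel, sub_sub, ← add_smul, norm_smul] at h
  norm_num at h
  linarith

lemma Real.rpow_add_le_mul_rpow_add_rpow {a b p : ℝ} (ha : 0 ≤ a) (hb : 0 ≤ b) (hp : 1 ≤ p) :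
    (a + b) ^ p ≤ 2 ^ (p - 1) * (a ^ p + b ^ p) := by
  lift a to NNReal using ha
  lift b to NNReal using hb
  exact_mod_cast NNReal.rpow_add_le_mul_rpow_add_rpow a b hp

lemma log_one_add_le_log_one_add_add {t a b : ℝ} (ht : 0 ≤ t) (ha : 0 ≤ a) (hb : 0 ≤ b)
    (htab : t ≤ a + b) : Real.log (1 + t) ≤ Real.log (1 + a) + Real.log (1 + b) := by
  rw [← Real.log_mul (by positivity) (by positivity)]
  exact Real.log_le_log (by positivity) (by nlinarith)

lemma two_rpow_mul_log_one_add_rpow_le {q t a b : ℝ} (hq : 1 ≤ q) (ht : 0 ≤ t) (ha : 0 ≤ a)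
    (hb : 0 ≤ b) (htab : t ≤ a + b) :
    2 ^ (1 - q) * Real.log (1 + t) ^ q ≤ Real.log (1 + a) ^ q + Real.log (1 + b) ^ q := by
  have hlog {u : ℝ} (hu : 0 ≤ u) : 0 ≤ Real.log (1 + u) := log_nonneg (by linarith)
  calc 2 ^ (1 - q) * Real.log (1 + t) ^ q
      ≤ 2 ^ (1 - q) * (Real.log (1 + a) + Real.log (1 + b)) ^ q := by
        gcongr
        exacts [hlog ht, log_one_add_le_log_one_add_add ht ha hb htab]
    _ ≤ 2 ^ (1 - q) * (2 ^ (q - 1) * (Real.log (1 + a) ^ q + Real.log (1 + b) ^ q)) := by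
        gcongr
        exact rpow_add_le_mul_rpow_add_rpow (hlog ha) (hlog hb) hq
    _ = Real.log (1 + a) ^ q + Real.log (1 + b) ^ q := by
        rw [← mul_assoc, ← rpow_add two_pos]
        simp

lemma exists_mul_log_one_add_rpow_le_add_sq {r q : ℝ} (hr : 0 ≤ r) (hq : 0 < q) :
    ∃ M, ∀ t, 0 ≤ t → r * Real.log (1 + t) ^ q ≤ M + t ^ 2 / 2 := by
  set a := r * q ^ q
  refine ⟨a + a ^ 2 / 2, fun t ht => ?_⟩
  -- `log v ≤ q v ^ (1 / q)`
  have hlog : Real.log (1 + t) ^ q ≤ q ^ q * (1 + t) :=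
    calc Real.log (1 + t) ^ q ≤ (q * (1 + t) ^ q⁻¹) ^ q := by
          gcongr
          · exact log_nonneg (by linarith)
          · simpa [div_inv_eq_mul, mul_comm] using
              log_le_rpow_div (x := 1 + t) (by positivity) (inv_pos.2 hq)
      _ = q ^ q * (1 + t) := by
          rw [mul_rpow hq.le (by positivity), ← rpow_mul (by positivity),
            inv_mul_cancel₀ hq.ne', rpow_one]
  calc r * Real.log (1 + t) ^ q ≤ a * (1 + t) := by
        rw [mul_assoc]
        gcongr
    _ ≤ a + a ^ 2 / 2 + t ^ 2 / 2 := by nlinarith [sq_nonneg (a - t)]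

lemma gaussian_log_weight_exponent_le {E : Type*} [NormedAddCommGroup E]
    [InnerProductSpace ℝ E] {r q M : ℝ} (hr : 0 ≤ r) (hq : 1 ≤ q)
    (hM : ∀ t, 0 ≤ t → r * Real.log (1 + t) ^ q ≤ M + t ^ 2 / 2) (x y : E) :
    -‖y‖ ^ 2 / 2 + 2 ^ (1 - q) * r * Real.log (1 + ‖y‖) ^ q + -‖y - x‖ ^ 2 / 2 ≤
      M + -‖x‖ ^ 2 / 4 + r * Real.log (1 + ‖x‖) ^ q + -‖y - (2⁻¹ : ℝ) • x‖ ^ 2 / 2 := by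
  have hpar := norm_sq_add_norm_sub_sq_eq x y
  set u := y - (2⁻¹ : ℝ) • x
  have hy : ‖y‖ ≤ ‖u‖ + ‖x‖ :=
    calc ‖y‖ = ‖u + (2⁻¹ : ℝ) • x‖ := by simp [u]
      _ ≤ ‖u‖ + ‖(2⁻¹ : ℝ) • x‖ := norm_add_le _ _
      _ ≤ ‖u‖ + ‖x‖ := by
          rw [norm_smul, norm_inv, Real.norm_two]
          linarith [norm_nonneg x]
  have hweight := mul_le_mul_of_nonneg_left
    (two_rpow_mul_log_one_add_rpow_le hq (norm_nonneg y) (norm_nonneg u) (norm_nonneg x) hy) hr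
  linarith [hM ‖u‖ (norm_nonneg u)]

lemma norm_ofReal_mul_cexp_neg_sq_norm {E : Type*} [SeminormedAddCommGroup E] {a : ℝ}
    (ha : 0 ≤ a) (v : E) :
    ‖(a : ℂ) * Complex.exp (-((‖v‖ : ℂ) ^ 2) / 2)‖ = a * rexp (-‖v‖ ^ 2 / 2) := by
  rw [norm_mul, Complex.norm_real, norm_of_nonneg ha, Complex.norm_exp]
  norm_cast

lemma norm_STFT_le_of_le_gaussian {d : ℕ} {φ f : EuclideanSpace ℝ (Fin d) → ℂ}
    {x ξ z : EuclideanSpace ℝ (Fin d)} {K : ℝ}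
    (h : ∀ y, ‖f y‖ * ‖φ (y - x)‖ ≤ K * rexp (-‖y - z‖ ^ 2 / 2)) :
    ‖STFT φ f x ξ‖ ≤ K := by
  have hG : ∫ y, rexp (-‖y - z‖ ^ 2 / 2) = (2 * π) ^ ((d : ℝ) / 2) := by
    have h := GaussianFourier.integral_rexp_neg_mul_sq_norm
      (V := EuclideanSpace ℝ (Fin d)) (b := 2⁻¹) (by norm_num)
    rw [finrank_euclideanSpace_fin, div_inv_eq_mul, mul_comm] at h
    rw [integral_sub_right_eq_self (fun y => rexp (-‖y‖ ^ 2 / 2)) z, ← h]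
    simp_rw [neg_div, div_eq_inv_mul, neg_mul]
  have hint : Integrable fun y => rexp (-‖y - z‖ ^ 2 / 2) :=
    .of_integral_ne_zero (by rw [hG]; positivity)
  have hI : ‖∫ y, f y * (starRingEnd ℂ) (φ (y - x)) *
      Complex.exp (-(Complex.I * (⟪y, ξ⟫ : ℝ)))‖ ≤ K * (2 * π) ^ ((d : ℝ) / 2) := by
    rw [← hG, ← integral_const_mul]
    refine norm_integral_le_of_norm_le (hint.const_mul K) (.of_forall fun y => ?_)
    simpa [norm_mul, Complex.norm_exp] using h y
  rw [STFT, norm_mul, Complex.norm_real, norm_of_nonneg (by positivity)]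
  calc (2 * π) ^ (-(d : ℝ) / 2) * ‖_‖
      ≤ (2 * π) ^ (-(d : ℝ) / 2) * (K * (2 * π) ^ ((d : ℝ) / 2)) := by gcongr
    _ = K := by
        rw [neg_div, rpow_neg (by positivity)]
        field_simp

theorem stft_bound_of_weighted_bound_log_general
    (d : ℕ) (s : ℝ) (hs0 : 0 ≤ s) (hs : s < 1 / 2)
    (q : ℝ) (hq : q = 1 / (1 - 2 * s))
    (φ : EuclideanSpace ℝ (Fin d) → ℂ)
    (hφ : φ = fun x => ((Real.pi ^ (-(d : ℝ) / 4) : ℝ) : ℂ) *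
      Complex.exp (-((‖x‖ : ℂ) ^ 2) / 2)) :
    ∃ c : ℝ, 0 < c ∧ ∀ r : ℝ, 0 < r → ∃ C : ℝ, 0 < C ∧
      ∀ f : EuclideanSpace ℝ (Fin d) → ℂ, Measurable f →
      ∀ A : ℝ, 0 ≤ A →
        (∀ y, ‖f y‖ ≤ A * Real.exp (-‖y‖ ^ 2 / 2) *
          Real.exp (c * r * Real.log (1 + ‖y‖) ^ q)) →
        ∀ x ξ, ‖STFT φ f x ξ‖ ≤
          C * A * Real.exp (-‖x‖ ^ 2 / 4) *
            Real.exp (r * Real.log (1 + ‖x‖) ^ q) := by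
  have hq1 : 1 ≤ q := by
    rw [hq, le_div_iff₀ (by linarith)]
    linarith
  refine ⟨2 ^ (1 - q), by positivity, fun r hr => ?_⟩
  obtain ⟨M, hM⟩ := exists_mul_log_one_add_rpow_le_add_sq hr.le (by linarith : 0 < q)
  refine ⟨π ^ (-(d : ℝ) / 4) * rexp M, by positivity, fun f _ A hA hfA x ξ => ?_⟩
  refine norm_STFT_le_of_le_gaussian (z := (2⁻¹ : ℝ) • x) fun y => ?_
  rw [hφ, norm_ofReal_mul_cexp_neg_sq_norm (by positivity)]
  calc ‖f y‖ * (π ^ (-(d : ℝ) / 4) * rexp (-‖y - x‖ ^ 2 / 2))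
      ≤ A * rexp (-‖y‖ ^ 2 / 2) * rexp (2 ^ (1 - q) * r * Real.log (1 + ‖y‖) ^ q) *
          (π ^ (-(d : ℝ) / 4) * rexp (-‖y - x‖ ^ 2 / 2)) := by
        gcongr
        exact hfA y
    _ = A * π ^ (-(d : ℝ) / 4) * rexp (-‖y‖ ^ 2 / 2 +
          2 ^ (1 - q) * r * Real.log (1 + ‖y‖) ^ q + -‖y - x‖ ^ 2 / 2) := by
        simp only [Real.exp_add]
        ring
    _ ≤ A * π ^ (-(d : ℝ) / 4) * rexp (M + -‖x‖ ^ 2 / 4 + r * Real.log (1 + ‖x‖) ^ q +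
          -‖y - (2⁻¹ : ℝ) • x‖ ^ 2 / 2) := by
        gcongr A * _ * rexp ?_
        exact gaussian_log_weight_exponent_le hr.le hq1 hM x y
    _ = π ^ (-(d : ℝ) / 4) * rexp M * A * rexp (-‖x‖ ^ 2 / 4) *
          rexp (r * Real.log (1 + ‖x‖) ^ q) * rexp (-‖y - (2⁻¹ : ℝ) • x‖ ^ 2 / 2) := by
        simp only [Real.exp_add]
        ring

/-- Estimate \eqref{Eq:FTEstGivesWeakPilSpProp1} in the sub-critical case
`0 ≤ s < 1/2`: a weighted Gaussian bound on `f` yields a weighted Gaussian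
bound on its short-time Fourier transform with Gaussian window, with weight
`e^{−r(log(1+|y|))^q}`, `q = 1/(1−2s)`. -/
theorem stft_bound_of_weighted_bound_log
    (d : ℕ) (hd : 1 ≤ d) (s : ℝ) (hs0 : 0 ≤ s) (hs : s < 1 / 2)
    (q : ℝ) (hq : q = 1 / (1 - 2 * s))
    (φ : EuclideanSpace ℝ (Fin d) → ℂ)
    (hφ : φ = fun x => ((Real.pi ^ (-(d : ℝ) / 4) : ℝ) : ℂ) *
      Complex.exp (-((‖x‖ : ℂ) ^ 2) / 2)) :
    ∃ c : ℝ, 0 < c ∧ ∀ r : ℝ, 0 < r → ∃ C : ℝ, 0 < C ∧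
      ∀ f : EuclideanSpace ℝ (Fin d) → ℂ, Measurable f →
      ∀ A : ℝ, 0 ≤ A →
        (∀ y, ‖f y‖ ≤ A * Real.exp (-‖y‖ ^ 2 / 2) *
          Real.exp (c * r * Real.log (1 + ‖y‖) ^ q)) →
        ∀ x ξ, ‖STFT φ f x ξ‖ ≤
          C * A * Real.exp (-‖x‖ ^ 2 / 4) *
            Real.exp (r * Real.log (1 + ‖x‖) ^ q) :=
  stft_bound_of_weighted_bound_log_general d s hs0 hs q hq φ hφ
end

section
/- Let d ≥ 1, σ > 0 and set p = 2σ/(σ+1) (so 0 < p < 2), and let φ(x) = π^{−d/4} e^{−|x|²/2}. Then there exists a constant c > 0, depending only on d and σ, such that for every r > 0 there is a constant C_r > 0 with the following property: for every Schwartz function f : ℝ^d → ℂ and every B ≥ 0 such that |V_φ f(x,ξ)| ≤ B·e^{−(|x|²+|ξ|²)/4}·e^{r(|x|²+|ξ|²)^{p/2}} for all x, ξ ∈ ℝ^d, one has |f(x)| ≤ C_r·B·e^{−|x|²/2}·e^{c·r·|x|^p} for all x ∈ ℝ^d. -/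
open MeasureTheory Complex
open scoped RealInnerProductSpace

/-! For fixed `x`, `ξ ↦ V_φ f(x, 2πξ)` is `(2π)^{-d/2}` times the Fourier transform of the
windowed function `g = f · conj φ(· - x)`. Since `p ≤ 2`, `(a² + b²)^{p/2} ≤ a^p + b^p`, so the
hypothesis bounds `|𝓕 g ξ|` by `e^{r|x|^p - |x|²/4}` times `e^{r|2πξ|^p - |2πξ|²/4}`, which is
integrable because `p < 2`. Fourier inversion then bounds `|g(y)|`. With `x = 2y` we get
`|φ(y - x)| = π^{-d/4} e^{-|y|²/2}` and `e^{-|x|²/4} = e^{-|y|²}`, whence the claim with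
`c = 2^p`. -/

open FourierTransform

theorem exists_mul_rpow_le_mul_sq_add {a b p : ℝ} (ha : 0 < a) (hb : 0 ≤ b) (hp0 : 0 ≤ p)
    (hp2 : p < 2) : ∃ C, ∀ t : ℝ, 0 ≤ t → b * t ^ p ≤ a * t ^ 2 + C := by
  set T := (b / a) ^ (2 - p)⁻¹
  have hT : 0 ≤ T := by positivity
  have hT_pow : T ^ (2 - p) = b / a := by
    rw [← Real.rpow_mul (by positivity), inv_mul_cancel₀ (by linarith), Real.rpow_one]
  refine ⟨b * T ^ p, fun t ht => ?_⟩
  rcases le_total t T with htT | hTt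
  · have : t ^ p ≤ T ^ p := Real.rpow_le_rpow ht htT hp0
    nlinarith [mul_le_mul_of_nonneg_left this hb, mul_nonneg ha.le (sq_nonneg t)]
  · have hb_le : b ≤ a * t ^ (2 - p) := by
      calc b = a * T ^ (2 - p) := by rw [hT_pow]; field_simp
        _ ≤ a * t ^ (2 - p) := by gcongr
    calc b * t ^ p ≤ a * t ^ (2 - p) * t ^ p := by gcongr
      _ = a * t ^ 2 := by
        rw [mul_assoc, ← Real.rpow_add' ht (by norm_num), sub_add_cancel, Real.rpow_two]
      _ ≤ a * t ^ 2 + b * T ^ p := le_add_of_nonneg_right (by positivity)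

noncomputable def gaussianRpowWeight (r p t : ℝ) : ℝ := Real.exp (r * t ^ p - t ^ 2 / 4)

theorem exp_mul_exp_le_gaussianRpowWeight_mul {r p X Y : ℝ} (hr : 0 ≤ r) (hp0 : 0 ≤ p)
    (hp2 : p ≤ 2) (hX : 0 ≤ X) (hY : 0 ≤ Y) :
    Real.exp (-(X ^ 2 + Y ^ 2) / 4) * Real.exp (r * (X ^ 2 + Y ^ 2) ^ (p / 2)) ≤
      gaussianRpowWeight r p X * gaussianRpowWeight r p Y := by
  have sq_rpow_half : ∀ t : ℝ, 0 ≤ t → (t ^ 2) ^ (p / 2) = t ^ p := fun t ht => by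
    rw [← Real.rpow_natCast, ← Real.rpow_mul ht]
    congr 1
    ring
  have hsub : (X ^ 2 + Y ^ 2) ^ (p / 2) ≤ X ^ p + Y ^ p := by
    rw [← sq_rpow_half X hX, ← sq_rpow_half Y hY]
    exact Real.rpow_add_le_add_rpow (by positivity) (by positivity) (by positivity)
      (by linarith)
  simp only [gaussianRpowWeight, ← Real.exp_add]
  exact Real.exp_le_exp.2 (by nlinarith [mul_le_mul_of_nonneg_left hsub hr])

theorem gaussianRpowWeight_two_mul (r p : ℝ) {t : ℝ} (ht : 0 ≤ t) :
    gaussianRpowWeight r p (2 * t) =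
      Real.exp (-t ^ 2 / 2) ^ 2 * Real.exp (2 ^ p * r * t ^ p) := by
  rw [gaussianRpowWeight, ← Real.exp_nat_mul, ← Real.exp_add,
    Real.mul_rpow zero_le_two ht]
  ring_nf

section FiniteDimensional

variable {V : Type*} [NormedAddCommGroup V] [InnerProductSpace ℝ V] [FiniteDimensional ℝ V]
  [MeasurableSpace V] [BorelSpace V]

theorem integrable_exp_neg_mul_sq_norm {a : ℝ} (ha : 0 < a) :
    Integrable (fun v : V => Real.exp (-a * ‖v‖ ^ 2)) := by
  refine (GaussianFourier.integrable_cexp_neg_mul_sq_norm_add (V := V) (b := a)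
    (by simpa using ha) 0 0).norm.congr (.of_forall fun v => ?_)
  simp [Complex.norm_exp, ← Complex.ofReal_pow]

theorem integrable_gaussianRpowWeight_norm {r p : ℝ} (hr : 0 ≤ r) (hp0 : 0 ≤ p) (hp2 : p < 2) :
    Integrable (fun v : V => gaussianRpowWeight r p ‖v‖) := by
  obtain ⟨C, hC⟩ := exists_mul_rpow_le_mul_sq_add (a := 1 / 8) (by norm_num) hr hp0 hp2
  refine ((integrable_exp_neg_mul_sq_norm (V := V) (a := 1 / 8) (by norm_num)).const_mul
    (Real.exp C)).mono' (by unfold gaussianRpowWeight; fun_prop) (.of_forall fun v => ?_)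
  rw [gaussianRpowWeight, Real.norm_of_nonneg (Real.exp_pos _).le, ← Real.exp_add]
  exact Real.exp_le_exp.2 (by nlinarith [hC ‖v‖ (norm_nonneg v)])

theorem norm_le_integral_of_norm_fourier_le {E : Type*} [NormedAddCommGroup E]
    [NormedSpace ℂ E] [CompleteSpace E] {g : V → E} {G : V → ℝ} (hg : Integrable g)
    (hG : Integrable G) (hgG : ∀ ξ, ‖𝓕 g ξ‖ ≤ G ξ) {y : V} (hgy : ContinuousAt g y) :
    ‖g y‖ ≤ ∫ ξ, G ξ := by
  have hFg : Integrable (𝓕 g) := hG.mono' (VectorFourier.fourierIntegral_continuous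
    Real.continuous_fourierChar continuous_inner hg).aestronglyMeasurable (.of_forall hgG)
  rw [← hg.fourierInv_fourier_eq hFg hgy, Real.fourierInv_eq]
  exact norm_integral_le_of_norm_le hG (.of_forall fun ξ => by rw [Circle.norm_smul]; exact hgG ξ)

end FiniteDimensional

theorem norm_ofReal_mul_cexp_neg_sq_div_two (c s : ℝ) :
    ‖(c : ℂ) * Complex.exp (-((s : ℂ) ^ 2) / 2)‖ = |c| * Real.exp (-s ^ 2 / 2) := by
  rw [norm_mul, Complex.norm_real, Real.norm_eq_abs, Complex.norm_exp]
  norm_cast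

theorem STFT_two_pi_smul_eq_fourier {d : ℕ} (φ f : EuclideanSpace ℝ (Fin d) → ℂ)
    (x ξ : EuclideanSpace ℝ (Fin d)) :
    STFT φ f x ((2 * Real.pi) • ξ) = (((2 * Real.pi) ^ (-(d : ℝ) / 2) : ℝ) : ℂ) *
      𝓕 (fun y => f y * (starRingEnd ℂ) (φ (y - x))) ξ := by
  rw [STFT, Real.fourier_eq']
  congr 2 with y
  rw [real_inner_smul_right, smul_eq_mul]
  push_cast
  ring_nf

theorem norm_fourier_le_of_norm_STFT_le {d : ℕ} {φ f : EuclideanSpace ℝ (Fin d) → ℂ}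
    {B r p : ℝ} (hB : 0 ≤ B) (hr : 0 ≤ r) (hp0 : 0 ≤ p) (hp2 : p ≤ 2)
    {x : EuclideanSpace ℝ (Fin d)}
    (hV : ∀ ξ, ‖STFT φ f x ξ‖ ≤ B * Real.exp (-(‖x‖ ^ 2 + ‖ξ‖ ^ 2) / 4) *
      Real.exp (r * (‖x‖ ^ 2 + ‖ξ‖ ^ 2) ^ (p / 2)))
    (ξ : EuclideanSpace ℝ (Fin d)) :
    ‖𝓕 (fun y => f y * (starRingEnd ℂ) (φ (y - x))) ξ‖ ≤
      ((2 * Real.pi) ^ (-(d : ℝ) / 2))⁻¹ * B * gaussianRpowWeight r p ‖x‖ *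
        gaussianRpowWeight r p ‖(2 * Real.pi) • ξ‖ := by
  have hK : 0 < (2 * Real.pi) ^ (-(d : ℝ) / 2) := by positivity
  have h := hV ((2 * Real.pi) • ξ)
  rw [STFT_two_pi_smul_eq_fourier, norm_mul, Complex.norm_real, Real.norm_of_nonneg hK.le,
    mul_comm, ← le_div_iff₀ hK, div_eq_inv_mul, mul_assoc B] at h
  grw [exp_mul_exp_le_gaussianRpowWeight_mul hr hp0 hp2 (norm_nonneg _) (norm_nonneg _)] at h
  exact h.trans_eq (by ring)

theorem pointwise_bound_of_stft_bound_flat_general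
    (d : ℕ) (σ : ℝ) (hσ : 0 < σ) (p : ℝ) (hp : p = 2 * σ / (σ + 1))
    (φ : EuclideanSpace ℝ (Fin d) → ℂ)
    (hφ : φ = fun x => ((Real.pi ^ (-(d : ℝ) / 4) : ℝ) : ℂ) *
      Complex.exp (-((‖x‖ : ℂ) ^ 2) / 2)) :
    ∃ c : ℝ, 0 < c ∧ ∀ r : ℝ, 0 < r → ∃ C : ℝ, 0 < C ∧
      ∀ f : SchwartzMap (EuclideanSpace ℝ (Fin d)) ℂ,
      ∀ B : ℝ, 0 ≤ B →
        (∀ x ξ : EuclideanSpace ℝ (Fin d), ‖STFT φ (⇑f) x ξ‖ ≤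
          B * Real.exp (-(‖x‖ ^ 2 + ‖ξ‖ ^ 2) / 4) *
            Real.exp (r * (‖x‖ ^ 2 + ‖ξ‖ ^ 2) ^ (p / 2))) →
        ∀ x : EuclideanSpace ℝ (Fin d), ‖f x‖ ≤
          C * B * Real.exp (-‖x‖ ^ 2 / 2) * Real.exp (c * r * ‖x‖ ^ p) := by
  have hp0 : 0 ≤ p := hp ▸ by positivity
  have hp2 : p < 2 := by rw [hp, div_lt_iff₀ (by positivity)]; linarith
  set K : ℝ := (2 * Real.pi) ^ (-(d : ℝ) / 2)
  set A : ℝ := Real.pi ^ (-(d : ℝ) / 4)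
  have hA : 0 < A := by positivity
  have hφ_cont : Continuous φ := by rw [hφ]; fun_prop
  have hφ_norm (t) : ‖φ t‖ = A * Real.exp (-‖t‖ ^ 2 / 2) := by
    rw [hφ, norm_ofReal_mul_cexp_neg_sq_div_two, abs_of_pos (by positivity)]
  refine ⟨2 ^ p, by positivity, fun r hr => ?_⟩
  have hW : Integrable fun ξ : EuclideanSpace ℝ (Fin d) =>
      gaussianRpowWeight r p ‖(2 * Real.pi) • ξ‖ :=
    (integrable_gaussianRpowWeight_norm hr.le hp0 hp2).comp_smul (by positivity)
  set I := ∫ ξ : EuclideanSpace ℝ (Fin d), gaussianRpowWeight r p ‖(2 * Real.pi) • ξ‖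
  refine ⟨K⁻¹ * I / A, by positivity [integral_exp_pos hW], fun f B hB hV y => ?_⟩
  set x : EuclideanSpace ℝ (Fin d) := (2 : ℝ) • y
  have hw_cont : Continuous fun t => (starRingEnd ℂ) (φ (t - x)) := by fun_prop
  have hw_le (t) : ‖(starRingEnd ℂ) (φ (t - x))‖ ≤ A := by
    rw [RCLike.norm_conj, hφ_norm]
    exact mul_le_of_le_one_right (by positivity) (Real.exp_le_one_iff.2 (by nlinarith))
  have hg_le := norm_le_integral_of_norm_fourier_le
    (f.integrable.mul_bdd hw_cont.aestronglyMeasurable (.of_forall hw_le)) (hW.const_mul _)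
    (norm_fourier_le_of_norm_STFT_le hB hr.le hp0 hp2.le (hV x))
    ((f.continuous.mul hw_cont).continuousAt (x := y))
  rw [integral_const_mul, norm_mul, RCLike.norm_conj, hφ_norm,
    show y - x = -y by simp [x, two_smul], norm_neg, norm_smul, Real.norm_two,
    gaussianRpowWeight_two_mul r p (norm_nonneg y)] at hg_le
  rw [← mul_le_mul_iff_of_pos_right (by positivity : 0 < A * Real.exp (-‖y‖ ^ 2 / 2))]
  refine hg_le.trans_eq ?_
  simp only [K, I]
  field_simp

/-- Roumieu case `s = ♭_σ`: a Gaussian-weighted bound on the short-time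
Fourier transform of `f` (with Gaussian window and weight
`e^{r|(x,ξ)|^p}`, `p = 2σ/(σ+1)`) yields a Gaussian-weighted pointwise bound
on `f`, with a dilated weight parameter `c·r`. -/
theorem pointwise_bound_of_stft_bound_flat
    (d : ℕ) (hd : 1 ≤ d) (σ : ℝ) (hσ : 0 < σ) (p : ℝ) (hp : p = 2 * σ / (σ + 1))
    (φ : EuclideanSpace ℝ (Fin d) → ℂ)
    (hφ : φ = fun x => ((Real.pi ^ (-(d : ℝ) / 4) : ℝ) : ℂ) *
      Complex.exp (-((‖x‖ : ℂ) ^ 2) / 2)) :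
    ∃ c : ℝ, 0 < c ∧ ∀ r : ℝ, 0 < r → ∃ C : ℝ, 0 < C ∧
      ∀ f : SchwartzMap (EuclideanSpace ℝ (Fin d)) ℂ,
      ∀ B : ℝ, 0 ≤ B →
        (∀ x ξ : EuclideanSpace ℝ (Fin d), ‖STFT φ (⇑f) x ξ‖ ≤
          B * Real.exp (-(‖x‖ ^ 2 + ‖ξ‖ ^ 2) / 4) *
            Real.exp (r * (‖x‖ ^ 2 + ‖ξ‖ ^ 2) ^ (p / 2))) →
        ∀ x : EuclideanSpace ℝ (Fin d), ‖f x‖ ≤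
          C * B * Real.exp (-‖x‖ ^ 2 / 2) * Real.exp (c * r * ‖x‖ ^ p) :=
  pointwise_bound_of_stft_bound_flat_general d σ hσ p hp φ hφ
end

section
/- Let d ≥ 1, let s ∈ ℝ with 0 ≤ s < 1/2 and set q = 1/(1 − 2s) (so q ≥ 1), and let φ(x) = π^{−d/4} e^{−|x|²/2}. Then there exists a constant c > 0, depending only on d and s, such that for every r > 0 there is a constant C_r > 0 with the following property: for every Schwartz function f : ℝ^d → ℂ and every B ≥ 0 such that |V_φ f(x,ξ)| ≤ B·e^{−(|x|²+|ξ|²)/4}·e^{r(log(1+ (|x|²+|ξ|²)^{1/2}))^q} for all x, ξ ∈ ℝ^d, one has |f(x)| ≤ C_r·B·e^{−|x|²/2}·e^{c·r·(log(1+|x|))^q} for all x ∈ ℝ^d. -/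
/-!
Fix `y` and put `g v = f v · conj (φ (v - 2y))`. Up to the factor `(2π)^{d/2}`, the Fourier transform
`𝓕 g w` is the STFT `V_φ f (2y, 2πw)`, so the hypothesis bounds it by `e^{-|y|² - π²|w|²}` times the
weight at `(2y, 2πw)`. That weight splits into `4^q r log(1+|y|)^q` and a term in `|w|` which, since
`log(1+t)^q` grows at most linearly, is absorbed by `(π² - 1)|w|²`. Fourier inversion at `y` then
bounds `|g y| = π^{-d/4} e^{-|y|²/2} |f y|` by `∫ |𝓕 g|`. Centring the STFT at `2y` is what makes
the exponents match: `e^{-|2y|²/4} = e^{-|y|²}`, divided by the window's `e^{-|y|²/2}`, is `e^{-|y|²/2}`.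
-/

open MeasureTheory Complex
open scoped RealInnerProductSpace

open scoped Real FourierTransform

namespace Real

lemma add_rpow_le_two_rpow_mul_add_rpow {q a b : ℝ} (hq : 0 ≤ q) (ha : 0 ≤ a) (hb : 0 ≤ b) :
    (a + b) ^ q ≤ 2 ^ q * (a ^ q + b ^ q) := by
  have hmax : max a b ^ q ≤ a ^ q + b ^ q := by
    rcases le_total a b with h | h
    · rw [max_eq_right h]; exact le_add_of_nonneg_left (rpow_nonneg ha q)
    · rw [max_eq_left h]; exact le_add_of_nonneg_right (rpow_nonneg hb q)
  calc (a + b) ^ q ≤ (2 * max a b) ^ q :=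
        rpow_le_rpow (by positivity) (by linarith [le_max_left a b, le_max_right a b]) hq
    _ = 2 ^ q * max a b ^ q := mul_rpow zero_le_two (ha.trans (le_max_left a b))
    _ ≤ 2 ^ q * (a ^ q + b ^ q) := by gcongr

lemma log_one_add_rpow_le {q t : ℝ} (hq : 0 < q) (ht : 0 ≤ t) :
    log (1 + t) ^ q ≤ q ^ q * (1 + t) := by
  have hlog : log (1 + t) ≤ q * (1 + t) ^ q⁻¹ := by
    simpa [div_inv_eq_mul, mul_comm] using log_le_rpow_div (by linarith) (inv_pos.2 hq)
  calc log (1 + t) ^ q ≤ (q * (1 + t) ^ q⁻¹) ^ q :=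
        rpow_le_rpow (log_nonneg (by linarith)) hlog hq.le
    _ = q ^ q * (1 + t) := by
        rw [mul_rpow hq.le (by positivity), ← rpow_mul (by linarith), inv_mul_cancel₀ hq.ne',
          rpow_one]

lemma exists_mul_log_one_add_mul_rpow_le_sq_add {q : ℝ} (hq : 0 < q) {K a : ℝ}
    (hK : 0 ≤ K) (ha : 0 ≤ a) :
    ∃ M, ∀ t, 0 ≤ t → K * log (1 + a * t) ^ q ≤ t ^ 2 + M := by
  set k := K * q ^ q
  refine ⟨k + (k * a) ^ 2 / 4, fun t ht => ?_⟩
  have hlin : K * log (1 + a * t) ^ q ≤ k + k * a * t := by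
    calc K * log (1 + a * t) ^ q ≤ K * (q ^ q * (1 + a * t)) :=
          mul_le_mul_of_nonneg_left (log_one_add_rpow_le hq (by positivity)) hK
      _ = k + k * a * t := by ring
  nlinarith [sq_nonneg (t - k * a / 2)]

lemma log_one_add_two_mul_rpow_le {q u : ℝ} (hq : 0 ≤ q) (hu : 0 ≤ u) :
    log (1 + 2 * u) ^ q ≤ 2 ^ q * log (1 + u) ^ q := by
  have hlog : log (1 + 2 * u) ≤ 2 * log (1 + u) := by
    rw [← log_rpow (by linarith), rpow_two]
    exact log_le_log (by linarith) (by nlinarith)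
  rw [← mul_rpow zero_le_two (log_nonneg (by linarith))]
  exact rpow_le_rpow (log_nonneg (by linarith)) hlog hq

lemma log_one_add_sqrt_sq_add_sq_rpow_le {q a b : ℝ} (hq : 0 ≤ q) (ha : 0 ≤ a) (hb : 0 ≤ b) :
    log (1 + (a ^ 2 + b ^ 2) ^ ((1 : ℝ) / 2)) ^ q ≤
      2 ^ q * (log (1 + a) ^ q + log (1 + b) ^ q) := by
  have hsqrt : (a ^ 2 + b ^ 2) ^ ((1 : ℝ) / 2) ≤ a + b := by
    rw [← sqrt_eq_rpow, sqrt_le_left (by positivity)]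
    nlinarith [mul_nonneg ha hb]
  have hlog : log (1 + (a ^ 2 + b ^ 2) ^ ((1 : ℝ) / 2)) ≤ log (1 + a) + log (1 + b) := by
    rw [← log_mul (by linarith) (by linarith)]
    exact log_le_log (by positivity) (by nlinarith [mul_nonneg ha hb])
  calc log (1 + (a ^ 2 + b ^ 2) ^ ((1 : ℝ) / 2)) ^ q ≤ (log (1 + a) + log (1 + b)) ^ q :=
        rpow_le_rpow (log_nonneg (le_add_of_nonneg_right (by positivity))) hlog hq
    _ ≤ 2 ^ q * (log (1 + a) ^ q + log (1 + b) ^ q) :=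
        add_rpow_le_two_rpow_mul_add_rpow hq (log_nonneg (by linarith)) (log_nonneg (by linarith))

end Real

lemma stft_weight_exponent_le {q r M u t : ℝ} (hq : 0 ≤ q) (hr : 0 ≤ r)
    (hM : ∀ t, 0 ≤ t → 2 ^ q * r * Real.log (1 + 2 * π * t) ^ q ≤ t ^ 2 + M)
    (hu : 0 ≤ u) (ht : 0 ≤ t) :
    -((2 * u) ^ 2 + (2 * π * t) ^ 2) / 4 +
        r * Real.log (1 + ((2 * u) ^ 2 + (2 * π * t) ^ 2) ^ ((1 : ℝ) / 2)) ^ q ≤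
      -u ^ 2 + 4 ^ q * r * Real.log (1 + u) ^ q + M + -t ^ 2 := by
  have hweight : r * Real.log (1 + ((2 * u) ^ 2 + (2 * π * t) ^ 2) ^ ((1 : ℝ) / 2)) ^ q ≤
      4 ^ q * r * Real.log (1 + u) ^ q + 2 ^ q * r * Real.log (1 + 2 * π * t) ^ q := by
    calc r * Real.log (1 + ((2 * u) ^ 2 + (2 * π * t) ^ 2) ^ ((1 : ℝ) / 2)) ^ q
        ≤ r * (2 ^ q * (Real.log (1 + 2 * u) ^ q + Real.log (1 + 2 * π * t) ^ q)) := by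
          gcongr
          exact Real.log_one_add_sqrt_sq_add_sq_rpow_le hq (by positivity) (by positivity)
      _ ≤ r * (2 ^ q * (2 ^ q * Real.log (1 + u) ^ q + Real.log (1 + 2 * π * t) ^ q)) := by
          gcongr
          exact Real.log_one_add_two_mul_rpow_le hq hu
      _ = 4 ^ q * r * Real.log (1 + u) ^ q + 2 ^ q * r * Real.log (1 + 2 * π * t) ^ q := by
          rw [show (4 : ℝ) = 2 * 2 by norm_num, Real.mul_rpow zero_le_two zero_le_two]
          ring
  have hπ : 2 * t ^ 2 ≤ π ^ 2 * t ^ 2 := by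
    gcongr
    nlinarith [Real.pi_gt_three]
  linarith [hM t ht]

lemma integral_exp_neg_norm_sq_pos {V : Type*} [NormedAddCommGroup V] [InnerProductSpace ℝ V]
    [FiniteDimensional ℝ V] [MeasurableSpace V] [BorelSpace V] :
    0 < ∫ w : V, Real.exp (-‖w‖ ^ 2) := by
  have h := GaussianFourier.integral_rexp_neg_mul_sq_norm (V := V) one_pos
  simp only [neg_one_mul] at h
  rw [h]
  positivity

lemma integrable_exp_neg_norm_sq {V : Type*} [NormedAddCommGroup V] [InnerProductSpace ℝ V]
    [FiniteDimensional ℝ V] [MeasurableSpace V] [BorelSpace V] :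
    Integrable (fun w : V => Real.exp (-‖w‖ ^ 2)) :=
  Integrable.of_integral_ne_zero integral_exp_neg_norm_sq_pos.ne'

theorem norm_le_integral_of_norm_fourier_le_s8 {V E : Type*} [NormedAddCommGroup V]
    [InnerProductSpace ℝ V] [FiniteDimensional ℝ V] [MeasurableSpace V] [BorelSpace V]
    [NormedAddCommGroup E] [NormedSpace ℂ E] [CompleteSpace E] {g : V → E} {h : V → ℝ}
    (hg : Integrable g) (hh : Integrable h) (hgh : ∀ w, ‖𝓕 g w‖ ≤ h w) {v : V}
    (hv : ContinuousAt g v) : ‖g v‖ ≤ ∫ w, h w := by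
  have hFg : Integrable (𝓕 g) :=
    hh.mono' (VectorFourier.fourierIntegral_continuous Real.continuous_fourierChar
      continuous_inner hg).aestronglyMeasurable (ae_of_all _ hgh)
  calc ‖g v‖ = ‖𝓕⁻ (𝓕 g) v‖ := by rw [hg.fourierInv_fourier_eq hFg hv]
    _ ≤ ∫ w, ‖𝓕 g w‖ := VectorFourier.norm_fourierIntegral_le_integral_norm _ _ _ _ _
    _ ≤ ∫ w, h w := integral_mono hFg.norm hh hgh

lemma norm_ofReal_mul_cexp_neg_norm_sq_div_two {V : Type*} [NormedAddCommGroup V] {a : ℝ}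
    (ha : 0 ≤ a) (x : V) :
    ‖(a : ℂ) * Complex.exp (-((‖x‖ : ℂ) ^ 2) / 2)‖ = a * Real.exp (-‖x‖ ^ 2 / 2) := by
  rw [norm_mul, Complex.norm_real, Real.norm_of_nonneg ha, Complex.norm_exp]
  norm_cast

lemma fourier_mul_conj_comp_sub_eq_stft {d : ℕ} (φ f : EuclideanSpace ℝ (Fin d) → ℂ)
    (x w : EuclideanSpace ℝ (Fin d)) :
    𝓕 (fun v => f v * (starRingEnd ℂ) (φ (v - x))) w =
      (((2 * π) ^ ((d : ℝ) / 2) : ℝ) : ℂ) * STFT φ f x ((2 * π) • w) := by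
  have hnorm : (((2 * π) ^ ((d : ℝ) / 2) : ℝ) : ℂ) * (((2 * π) ^ (-(d : ℝ) / 2) : ℝ) : ℂ) = 1 := by
    rw [← Complex.ofReal_mul, ← Real.rpow_add (by positivity), neg_div, add_neg_cancel,
      Real.rpow_zero, Complex.ofReal_one]
  rw [Real.fourier_eq', STFT, ← mul_assoc, hnorm, one_mul]
  congr 1 with v
  rw [real_inner_smul_right, smul_eq_mul, mul_comm]
  push_cast
  ring_nf

def GaussLogSTFTBound {d : ℕ} (φ f : EuclideanSpace ℝ (Fin d) → ℂ) (B r q : ℝ) : Prop :=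
  ∀ x ξ : EuclideanSpace ℝ (Fin d), ‖STFT φ f x ξ‖ ≤
    B * Real.exp (-(‖x‖ ^ 2 + ‖ξ‖ ^ 2) / 4) *
      Real.exp (r * Real.log (1 + (‖x‖ ^ 2 + ‖ξ‖ ^ 2) ^ ((1 : ℝ) / 2)) ^ q)

lemma norm_fourier_mul_conj_comp_sub_two_smul_le {d : ℕ} {φ f : EuclideanSpace ℝ (Fin d) → ℂ}
    {B r q M : ℝ} (hq : 0 ≤ q) (hr : 0 ≤ r) (hB : 0 ≤ B)
    (hM : ∀ t, 0 ≤ t → 2 ^ q * r * Real.log (1 + 2 * π * t) ^ q ≤ t ^ 2 + M)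
    (hbound : GaussLogSTFTBound φ f B r q)
    (y w : EuclideanSpace ℝ (Fin d)) :
    ‖𝓕 (fun v => f v * (starRingEnd ℂ) (φ (v - (2 : ℝ) • y))) w‖ ≤
      (2 * π) ^ ((d : ℝ) / 2) * B *
        Real.exp (-‖y‖ ^ 2 + 4 ^ q * r * Real.log (1 + ‖y‖) ^ q + M) * Real.exp (-‖w‖ ^ 2) := by
  have hstft := hbound ((2 : ℝ) • y) ((2 * π) • w)
  rw [norm_smul, norm_smul, Real.norm_of_nonneg zero_le_two,
    Real.norm_of_nonneg (by positivity), mul_assoc, ← Real.exp_add] at hstft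
  calc ‖𝓕 (fun v => f v * (starRingEnd ℂ) (φ (v - (2 : ℝ) • y))) w‖
      = (2 * π) ^ ((d : ℝ) / 2) * ‖STFT φ f ((2 : ℝ) • y) ((2 * π) • w)‖ := by
        rw [fourier_mul_conj_comp_sub_eq_stft, norm_mul, Complex.norm_real,
          Real.norm_of_nonneg (by positivity)]
    _ ≤ (2 * π) ^ ((d : ℝ) / 2) * (B *
          Real.exp (-‖y‖ ^ 2 + 4 ^ q * r * Real.log (1 + ‖y‖) ^ q + M + -‖w‖ ^ 2)) := by
        refine mul_le_mul_of_nonneg_left (hstft.trans ?_) (by positivity)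
        exact mul_le_mul_of_nonneg_left (Real.exp_le_exp.2 <|
          stft_weight_exponent_le hq hr hM (norm_nonneg y) (norm_nonneg w)) hB
    _ = _ := by rw [Real.exp_add]; ring

lemma integrable_mul_conj_comp_sub {V : Type*} [NormedAddCommGroup V] [MeasurableSpace V]
    [OpensMeasurableSpace V] {μ : Measure V} {φ f : V → ℂ} {a : ℝ} (hf : Integrable f μ)
    (hφ : Continuous φ) (hφa : ∀ x, ‖φ x‖ ≤ a) (x : V) :
    Integrable (fun v => f v * (starRingEnd ℂ) (φ (v - x))) μ :=
  hf.mul_bdd (continuous_conj.comp (hφ.comp (continuous_sub_right x))).aestronglyMeasurable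
    (ae_of_all _ fun _ => (RCLike.norm_conj _).trans_le (hφa _))

theorem norm_le_of_stft_bound {d : ℕ} {φ f : EuclideanSpace ℝ (Fin d) → ℂ}
    {a B r q M : ℝ} (ha : 0 < a) (hφ_norm : ∀ x, ‖φ x‖ = a * Real.exp (-‖x‖ ^ 2 / 2))
    (hφ : Continuous φ) (hf : Integrable f) (hf_cont : Continuous f)
    (hq : 0 ≤ q) (hr : 0 ≤ r) (hB : 0 ≤ B)
    (hM : ∀ t, 0 ≤ t → 2 ^ q * r * Real.log (1 + 2 * π * t) ^ q ≤ t ^ 2 + M)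
    (hbound : GaussLogSTFTBound φ f B r q)
    (y : EuclideanSpace ℝ (Fin d)) :
    ‖f y‖ ≤ a⁻¹ * (2 * π) ^ ((d : ℝ) / 2) * (∫ w : EuclideanSpace ℝ (Fin d), Real.exp (-‖w‖ ^ 2)) *
      Real.exp M * B * Real.exp (-‖y‖ ^ 2 / 2) * Real.exp (4 ^ q * r * Real.log (1 + ‖y‖) ^ q) := by
  have hφa (x) : ‖φ x‖ ≤ a := by
    rw [hφ_norm]
    exact mul_le_of_le_one_right ha.le (Real.exp_le_one_iff.2 (by nlinarith [norm_nonneg x]))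
  have hgy := norm_le_integral_of_norm_fourier_le_s8
    (integrable_mul_conj_comp_sub hf hφ hφa ((2 : ℝ) • y))
    (integrable_exp_neg_norm_sq.const_mul _)
    (norm_fourier_mul_conj_comp_sub_two_smul_le hq hr hB hM hbound y)
    (v := y) (by fun_prop : Continuous _).continuousAt
  rw [integral_const_mul, norm_mul, RCLike.norm_conj,
    show y - (2 : ℝ) • y = -y by rw [two_smul]; abel, hφ_norm, norm_neg] at hgy
  have hexp : Real.exp (-‖y‖ ^ 2 + 4 ^ q * r * Real.log (1 + ‖y‖) ^ q + M) =
      Real.exp M * Real.exp (-‖y‖ ^ 2 / 2) * Real.exp (4 ^ q * r * Real.log (1 + ‖y‖) ^ q) *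
        Real.exp (-‖y‖ ^ 2 / 2) := by
    simp only [← Real.exp_add]; ring_nf
  rw [hexp, ← le_div_iff₀ (by positivity)] at hgy
  refine hgy.trans_eq ?_
  field_simp

theorem pointwise_bound_of_stft_bound_log_general
    (d : ℕ) (s : ℝ) (hs : s < 1 / 2)
    (q : ℝ) (hq : q = 1 / (1 - 2 * s))
    (φ : EuclideanSpace ℝ (Fin d) → ℂ)
    (hφ : φ = fun x => ((Real.pi ^ (-(d : ℝ) / 4) : ℝ) : ℂ) *
      Complex.exp (-((‖x‖ : ℂ) ^ 2) / 2)) :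
    ∃ c : ℝ, 0 < c ∧ ∀ r : ℝ, 0 < r → ∃ C : ℝ, 0 < C ∧
      ∀ f : SchwartzMap (EuclideanSpace ℝ (Fin d)) ℂ,
      ∀ B : ℝ, 0 ≤ B →
        (∀ x ξ : EuclideanSpace ℝ (Fin d), ‖STFT φ (⇑f) x ξ‖ ≤
          B * Real.exp (-(‖x‖ ^ 2 + ‖ξ‖ ^ 2) / 4) *
            Real.exp (r * Real.log (1 + (‖x‖ ^ 2 + ‖ξ‖ ^ 2) ^ ((1 : ℝ) / 2)) ^ q)) →
        ∀ x : EuclideanSpace ℝ (Fin d), ‖f x‖ ≤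
          C * B * Real.exp (-‖x‖ ^ 2 / 2) *
            Real.exp (c * r * Real.log (1 + ‖x‖) ^ q) := by
  have hq0 : 0 < q := hq ▸ one_div_pos.2 (by linarith)
  have hφ_norm (x) : ‖φ x‖ = π ^ (-(d : ℝ) / 4) * Real.exp (-‖x‖ ^ 2 / 2) :=
    hφ ▸ norm_ofReal_mul_cexp_neg_norm_sq_div_two (by positivity) x
  have hφ_cont : Continuous φ := by rw [hφ]; fun_prop
  have hJ := integral_exp_neg_norm_sq_pos (V := EuclideanSpace ℝ (Fin d))
  refine ⟨4 ^ q, by positivity, fun r hr => ?_⟩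
  obtain ⟨M, hM⟩ := Real.exists_mul_log_one_add_mul_rpow_le_sq_add hq0
    (K := 2 ^ q * r) (a := 2 * π) (by positivity) (by positivity)
  exact ⟨_, by positivity, fun f B hB hbound => norm_le_of_stft_bound (by positivity) hφ_norm
    hφ_cont f.integrable f.continuous hq0.le hr.le hB hM hbound⟩

/-- Sub-critical case `0 ≤ s < 1/2`: a Gaussian-weighted bound on the
short-time Fourier transform of `f` (with Gaussian window and weight
`e^{r(log(1+|(x,ξ)|))^q}`, `q = 1/(1−2s)`) yields a Gaussian-weighted
pointwise bound on `f`, with a dilated weight parameter `c·r`. -/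
theorem pointwise_bound_of_stft_bound_log
    (d : ℕ) (hd : 1 ≤ d) (s : ℝ) (hs0 : 0 ≤ s) (hs : s < 1 / 2)
    (q : ℝ) (hq : q = 1 / (1 - 2 * s))
    (φ : EuclideanSpace ℝ (Fin d) → ℂ)
    (hφ : φ = fun x => ((Real.pi ^ (-(d : ℝ) / 4) : ℝ) : ℂ) *
      Complex.exp (-((‖x‖ : ℂ) ^ 2) / 2)) :
    ∃ c : ℝ, 0 < c ∧ ∀ r : ℝ, 0 < r → ∃ C : ℝ, 0 < C ∧
      ∀ f : SchwartzMap (EuclideanSpace ℝ (Fin d)) ℂ,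
      ∀ B : ℝ, 0 ≤ B →
        (∀ x ξ : EuclideanSpace ℝ (Fin d), ‖STFT φ (⇑f) x ξ‖ ≤
          B * Real.exp (-(‖x‖ ^ 2 + ‖ξ‖ ^ 2) / 4) *
            Real.exp (r * Real.log (1 + (‖x‖ ^ 2 + ‖ξ‖ ^ 2) ^ ((1 : ℝ) / 2)) ^ q)) →
        ∀ x : EuclideanSpace ℝ (Fin d), ‖f x‖ ≤
          C * B * Real.exp (-‖x‖ ^ 2 / 2) *
            Real.exp (c * r * Real.log (1 + ‖x‖) ^ q) :=
  pointwise_bound_of_stft_bound_log_general d s hs q hq φ hφ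
end

section
/- Let n ≥ 1, let s ∈ ℝ with 0 ≤ s < 1/2, set q = 1/(1 − 2s) (so q ≥ 1), let r ≥ 0, and define ω : ℝ^n → ℝ by ω(x) = e^{−r(log(1+|x|))^q}. Then there exist a real R ≥ 2 and positive constants c and C such that C^{−1}·ω(x) ≤ ω(x+y) ≤ C·ω(x) for all x, y ∈ ℝ^n satisfying |x| ≥ R·c and |x|·|y| ≤ c. -/
/-!
Write `ω(x) = exp (-r φ(1 + |x|))` with `φ(t) = (log t)^q`. Bernoulli's inequality gives
`φ(b) - φ(a) ≤ q (log b)^(q-1) (log b - log a) ≤ q (log b)^q (b - a) / a`, and `log t ≤ q t^(1/q)`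
bounds `(log b)^q` by `q^q b`. Hence `φ` changes by at most a constant over any step of length
`≤ 1` between comparable points `≥ e`. Taking `R = 4`, `c = 1` forces `|x| ≥ 4` and `|y| ≤ 1/4`,
so `1 + |x|` and `1 + |x + y|` are such points, and `ω(x + y) / ω(x)` stays between `e^{∓rK}`,
`K = 2 q^(q+1)`.
-/

open Real

namespace Real

lemma rpow_sub_rpow_le_mul_sub {a b p : ℝ} (ha : 0 < a) (hab : a ≤ b) (hp : 1 ≤ p) :
    b ^ p - a ^ p ≤ p * b ^ (p - 1) * (b - a) := by
  have hb : 0 < b := ha.trans_le hab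
  have bernoulli := one_add_mul_self_le_rpow_one_add (s := a / b - 1)
    (by linarith [div_pos ha hb]) hp
  rw [add_sub_cancel, div_rpow ha.le hb.le, le_div_iff₀ (rpow_pos_of_pos hb p)] at bernoulli
  have hbp : b ^ p = b ^ (p - 1) * b := by rw [← rpow_add_one hb.ne', sub_add_cancel]
  have : (1 + p * (a / b - 1)) * b ^ p = b ^ p - p * b ^ (p - 1) * (b - a) := by
    rw [hbp]; field_simp; ring
  linarith

lemma log_rpow_le_mul_self {x q : ℝ} (hx : 1 ≤ x) (hq : 0 < q) : log x ^ q ≤ q ^ q * x := by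
  have hx0 : 0 ≤ x := by linarith
  calc log x ^ q ≤ (x ^ q⁻¹ / q⁻¹) ^ q :=
        rpow_le_rpow (log_nonneg hx) (log_le_rpow_div hx0 (inv_pos.2 hq)) hq.le
    _ = q ^ q * x := by
        rw [div_inv_eq_mul, mul_comm, mul_rpow hq.le (rpow_nonneg hx0 _),
          ← rpow_mul hx0, inv_mul_cancel₀ hq.ne', rpow_one]

lemma log_rpow_sub_log_rpow_le {q a b : ℝ} (hq : 1 ≤ q) (ha : exp 1 ≤ a) (hab : a ≤ b) :
    log b ^ q - log a ^ q ≤ q ^ (q + 1) * (b / a) * (b - a) := by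
  have ha0 : 0 < a := (exp_pos 1).trans_le ha
  have hb0 : 0 < b := ha0.trans_le hab
  have hlog_a : 1 ≤ log a := (le_log_iff_exp_le ha0).2 ha
  have hlog_ab : log a ≤ log b := log_le_log ha0 hab
  have hlog_diff : log b - log a ≤ (b - a) / a := by
    rw [← log_div hb0.ne' ha0.ne']
    calc log (b / a) ≤ b / a - 1 := log_le_sub_one_of_pos (div_pos hb0 ha0)
      _ = (b - a) / a := by field_simp
  have hpow : log b ^ (q - 1) ≤ q ^ q * b :=
    (rpow_le_rpow_of_exponent_le (hlog_a.trans hlog_ab) (by linarith)).trans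
      (log_rpow_le_mul_self (by linarith [add_one_le_exp 1]) (by linarith))
  calc log b ^ q - log a ^ q ≤ q * log b ^ (q - 1) * (log b - log a) :=
        rpow_sub_rpow_le_mul_sub (by linarith) hlog_ab hq
    _ ≤ q * (q ^ q * b) * ((b - a) / a) := by gcongr
    _ = q ^ (q + 1) * (b / a) * (b - a) := by
        rw [rpow_add_one (by positivity)]; ring

lemma abs_log_rpow_sub_log_rpow_le {q a b : ℝ} (hq : 1 ≤ q) (ha : exp 1 ≤ a) (hb : exp 1 ≤ b)
    (hab : b ≤ 2 * a) (hba : a ≤ 2 * b) :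
    |log b ^ q - log a ^ q| ≤ 2 * q ^ (q + 1) * |b - a| := by
  wlog h : a ≤ b generalizing a b
  · rw [abs_sub_comm, abs_sub_comm b]
    exact this hb ha hba hab (le_of_not_ge h)
  have ha0 : 0 < a := (exp_pos 1).trans_le ha
  have hlog_a : 0 ≤ log a := log_nonneg (by linarith [add_one_le_exp 1])
  have hmono : log a ^ q ≤ log b ^ q := rpow_le_rpow hlog_a (log_le_log ha0 h) (by linarith)
  rw [abs_of_nonneg (sub_nonneg.2 hmono), abs_of_nonneg (sub_nonneg.2 h)]
  calc log b ^ q - log a ^ q ≤ q ^ (q + 1) * (b / a) * (b - a) := log_rpow_sub_log_rpow_le hq ha h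
    _ ≤ q ^ (q + 1) * 2 * (b - a) := by
        gcongr
        exact (div_le_iff₀ ha0).2 hab
    _ = 2 * q ^ (q + 1) * (b - a) := by ring

lemma exp_neg_mul_le_of_abs_sub_le {r u v K : ℝ} (hr : 0 ≤ r) (h : |v - u| ≤ K) :
    (exp (r * K))⁻¹ * exp (-(r * u)) ≤ exp (-(r * v)) ∧
      exp (-(r * v)) ≤ exp (r * K) * exp (-(r * u)) := by
  rw [← exp_neg, ← exp_add, ← exp_add, exp_le_exp, exp_le_exp]
  have := abs_le.1 h
  constructor <;> nlinarith

end Real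

theorem weight_moderate_log_general
    (n : ℕ) (s : ℝ) (hs0 : 0 ≤ s) (hs : s < 1 / 2)
    (q : ℝ) (hq : q = 1 / (1 - 2 * s))
    (r : ℝ) (hr : 0 ≤ r) (ω : EuclideanSpace ℝ (Fin n) → ℝ)
    (hω : ω = fun x => Real.exp (-(r * Real.log (1 + ‖x‖) ^ q))) :
    ∃ R c C : ℝ, 2 ≤ R ∧ 0 < c ∧ 0 < C ∧
      ∀ x y : EuclideanSpace ℝ (Fin n), R * c ≤ ‖x‖ → ‖x‖ * ‖y‖ ≤ c →
        C⁻¹ * ω x ≤ ω (x + y) ∧ ω (x + y) ≤ C * ω x := by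
  have hq1 : 1 ≤ q := hq ▸ one_le_one_div (by linarith) (by linarith)
  refine ⟨4, 1, exp (r * (2 * q ^ (q + 1))), by norm_num, one_pos, exp_pos _,
    fun x y hx hxy => ?_⟩
  have hy : ‖y‖ ≤ 1 / 4 := by nlinarith [norm_nonneg y]
  have hdist : |(1 + ‖x + y‖) - (1 + ‖x‖)| ≤ ‖y‖ := by
    simpa using abs_norm_sub_norm_le (x + y) x
  have he : exp 1 ≤ 3 := exp_one_lt_three.le
  obtain ⟨hdist_lo, hdist_hi⟩ := abs_le.1 hdist
  have key := abs_log_rpow_sub_log_rpow_le hq1 (a := 1 + ‖x‖) (b := 1 + ‖x + y‖)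
    (by linarith) (by linarith) (by linarith) (by linarith)
  subst hω
  exact exp_neg_mul_le_of_abs_sub_le hr
    (key.trans (mul_le_of_le_one_right (by positivity) (by linarith)))

/-- **Moderateness of the weight `ω_{n,r,s}(x) = e^{−r(log(1+|x|))^q}`,
`q = 1/(1−2s)`, `0 ≤ s < 1/2`**: there are `R ≥ 2` and positive constants
`c`, `C` such that `C⁻¹ ω(x) ≤ ω(x+y) ≤ C ω(x)` whenever `Rc ≤ |x| ≤ c/|y|`. -/
theorem weight_moderate_log
    (n : ℕ) (hn : 1 ≤ n) (s : ℝ) (hs0 : 0 ≤ s) (hs : s < 1 / 2)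
    (q : ℝ) (hq : q = 1 / (1 - 2 * s))
    (r : ℝ) (hr : 0 ≤ r) (ω : EuclideanSpace ℝ (Fin n) → ℝ)
    (hω : ω = fun x => Real.exp (-(r * Real.log (1 + ‖x‖) ^ q))) :
    ∃ R c C : ℝ, 2 ≤ R ∧ 0 < c ∧ 0 < C ∧
      ∀ x y : EuclideanSpace ℝ (Fin n), R * c ≤ ‖x‖ → ‖x‖ * ‖y‖ ≤ c →
        C⁻¹ * ω x ≤ ω (x + y) ∧ ω (x + y) ≤ C * ω x :=
  weight_moderate_log_general n s hs0 hs q hq r hr ω hω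
end
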